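/- arXiv:1402.4368 — 3 statements merged into one kernel-verified Lean document; each statement's English description precedes it below -/
import Mathlib

section
/- Let M ∈ (ℂ[τ])^{m×n} be a polynomial matrix and let ⟨M⟩ denote the ℂ[τ]-submodule of ℂ[τ]^{1×n} generated by the rows of M. If the quotient module ℂ[τ]^{1×n}/⟨M⟩ is torsion free, then there exists r ∈ ℕ with r ≤ min(n,m) such that for all t ∈ ℂ, the rank of the complex matrix M(t) (obtained by evaluating each polynomial entry at t) equals r. -/
open Polynomial

/-- The row module of a polynomial matrix: the `ℂ[X]`-submodule of `ℂ[X]^{1×n}`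
generated by the rows of `M`. -/
noncomputable def rowModule {m n : ℕ} (M : Matrix (Fin m) (Fin n) ℂ[X]) :
    Submodule ℂ[X] (Fin n → ℂ[X]) :=
  Submodule.span ℂ[X] (Set.range fun i => M i)

private lemma exists_left_factor {m r n : ℕ} (A : Matrix (Fin m) (Fin n) ℂ[X])
    (B : Matrix (Fin r) (Fin n) ℂ[X])
    (h : ∀ i, A i ∈ Submodule.span ℂ[X] (Set.range fun j => B j)) :
    ∃ C : Matrix (Fin m) (Fin r) ℂ[X], A = C * B := by
  choose c hc using fun i => (Submodule.mem_span_range_iff_exists_fun ℂ[X]).mp (h i)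
  refine ⟨Matrix.of fun i => c i, ?_⟩
  refine Matrix.ext fun i j => ?_
  rw [Matrix.mul_apply]
  have := congrFun (hc i) j
  simpa [Finset.sum_apply] using this.symm

private lemma rank_map_le_aux {m r n : ℕ} (A : Matrix (Fin m) (Fin n) ℂ[X])
    (B : Matrix (Fin r) (Fin n) ℂ[X])
    (h : ∀ i, A i ∈ Submodule.span ℂ[X] (Set.range fun j => B j)) (t : ℂ) :
    (A.map (eval t)).rank ≤ (B.map (eval t)).rank := by
  obtain ⟨C, hC⟩ := exists_left_factor A B h
  have hmul : (A.map (eval t)) = (C.map (eval t)) * (B.map (eval t)) := by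
    rw [hC]
    exact Matrix.map_mul (f := evalRingHom t)
  rw [hmul]
  exact Matrix.rank_mul_le_right _ _

theorem stmt0 {m n : ℕ} (M : Matrix (Fin m) (Fin n) ℂ[X])
    (htf : ∀ (p : ℂ[X]) (x : Fin n → ℂ[X]),
      p ≠ 0 → p • x ∈ rowModule M → x ∈ rowModule M) :
    ∃ r : ℕ, r ≤ min n m ∧ ∀ t : ℂ, (M.map (Polynomial.eval t)).rank = r := by
  classical
  obtain ⟨r, snf⟩ := (rowModule M).smithNormalForm (Pi.basisFun ℂ[X] (Fin n))
  -- The matrix whose rows are the basis `bM` of `ℂ[X]^n`.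
  set Bm : Matrix (Fin n) (Fin n) ℂ[X] := Matrix.of fun i => snf.bM i with hBm
  -- The submatrix of rows indexed by the range of `f`.
  set V : Matrix (Fin r) (Fin n) ℂ[X] := Matrix.of fun i => snf.bM (snf.f i) with hV
  have ha : ∀ i, snf.a i ≠ 0 := by
    intro i hi
    have h1 := snf.snf i
    rw [hi, zero_smul] at h1
    exact snf.bN.ne_zero i (Subtype.ext h1)
  have hmemV : ∀ i, V i ∈ rowModule M := by
    intro i
    refine htf (snf.a i) _ (ha i) ?_
    rw [show snf.a i • V i = ((snf.bN i : Fin n → ℂ[X])) from (snf.snf i).symm]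
    exact (snf.bN i).2
  have hmemM : ∀ i, M i ∈ Submodule.span ℂ[X] (Set.range fun j => V j) := by
    intro i
    have hi : M i ∈ rowModule M := Submodule.subset_span ⟨i, rfl⟩
    obtain ⟨c, hc⟩ := snf.bN.mem_submodule_iff.mp hi
    rw [hc]
    refine Submodule.sum_mem _ fun k _ => ?_
    show c k • ((snf.bN k : Fin n → ℂ[X])) ∈ _
    rw [snf.snf k]
    exact Submodule.smul_mem _ _ (Submodule.smul_mem _ _ (Submodule.subset_span ⟨k, rfl⟩))
  -- the rank of `V.map (eval t)` is `r` for every `t`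
  have hrankV : ∀ t : ℂ, (V.map (eval t)).rank = r := by
    intro t
    have hBt : Bm.transpose = (Pi.basisFun ℂ[X] (Fin n)).toMatrix snf.bM := by
      ext i j
      simp [hBm, Module.Basis.toMatrix_apply, Matrix.transpose_apply]
    have : Invertible ((Pi.basisFun ℂ[X] (Fin n)).toMatrix snf.bM) :=
      (Pi.basisFun ℂ[X] (Fin n)).invertibleToMatrix snf.bM
    have hdet : IsUnit Bm.det := by
      have h1 : IsUnit ((Pi.basisFun ℂ[X] (Fin n)).toMatrix snf.bM).det :=
        (Matrix.isUnit_iff_isUnit_det _).mp (isUnit_of_invertible _)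
      rwa [← hBt, Matrix.det_transpose] at h1
    have hdet_t : IsUnit ((Bm.map (eval t)).det) := by
      have h2 : (Bm.map (eval t)).det = eval t Bm.det :=
        (RingHom.map_det (evalRingHom t) Bm).symm
      rw [h2]
      exact hdet.map (evalRingHom t)
    have hli : LinearIndependent ℂ (fun i => (Bm.map (eval t)) i) :=
      Matrix.linearIndependent_rows_iff_isUnit.mpr
        ((Matrix.isUnit_iff_isUnit_det _).mpr hdet_t)
    have hliV : LinearIndependent ℂ (fun i => (V.map (eval t)) i) := by
      have hVe : (fun i => (V.map (eval t)) i) = fun i => (Bm.map (eval t)) (snf.f i) := rfl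
      rw [hVe]
      exact hli.comp _ snf.f.injective
    have := LinearIndependent.rank_matrix (M := V.map (eval t)) hliV
    simpa using this
  have hrankM : ∀ t : ℂ, (M.map (eval t)).rank = r := by
    intro t
    refine le_antisymm ?_ ?_
    · rw [← hrankV t]
      exact rank_map_le_aux M V hmemM t
    · rw [← hrankV t]
      exact rank_map_le_aux V M hmemV t
  refine ⟨r, le_min ?_ ?_, hrankM⟩
  · simpa using Fintype.card_le_of_embedding snf.f
  · have h1 := (M.map (eval 0)).rank_le_card_height
    rw [hrankM 0] at h1
    simpa using h1
end

section
/- Let M ∈ (ℂ[τ])^{m×n} be a polynomial matrix. If the rank of the evaluated matrix M(t) is not constant as t ranges over ℂ, then the quotient ℂ[τ]-module ℂ[τ]^{1×n}/⟨M⟩ has a nontrivial torsion element; i.e., there exist m ∈ ℂ[τ]^{1×n} with m ∉ ⟨M⟩ and a nonzero polynomial p ∈ ℂ[τ] with p·m ∈ ⟨M⟩. -/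
/-!
Take a Smith normal form of the row module `N = ⟨M⟩ ⊆ ℂ[τ]^n`: a basis `b` of `ℂ[τ]^n` and
invariant factors `a₁, …, a_k` such that `a₁ b₁, …, a_k b_k` is a basis of `N`. If some `aᵢ` is
not a unit, then `bᵢ ∉ N` while `aᵢ bᵢ ∈ N`. If all of them are units, then `N` is spanned by
`b₁, …, b_k`, so `M(t)` has the same row space as the matrix with rows `bᵢ(t)`; these rows are
part of the invertible matrix `(b₁(t), …, b_n(t))`, so `rank M(t) = k` for every `t`.
-/

open Polynomial

namespace Matrix

variable {R K : Type*} [CommRing R] [Field K] (φ : R →+* K) {ι κ n : Type*}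

theorem exists_mul_eq_of_span_row_le [Fintype κ] {A : Matrix ι n R} {B : Matrix κ n R}
    (h : Submodule.span R (Set.range A.row) ≤ Submodule.span R (Set.range B.row)) :
    ∃ C : Matrix ι κ R, C * B = A := by
  have hA : ∀ i, ∃ c : κ → R, c ᵥ* B = A.row i := fun i => by
    simpa [← range_vecMulLinear] using h (Submodule.subset_span ⟨i, rfl⟩)
  choose c hc using hA
  exact ⟨Matrix.of c, funext fun i => (mul_apply_eq_vecMul _ _ i).trans (hc i)⟩

theorem rank_map_le_of_span_row_le [Fintype κ] [Fintype n] {A : Matrix ι n R} {B : Matrix κ n R}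
    (h : Submodule.span R (Set.range A.row) ≤ Submodule.span R (Set.range B.row)) :
    (A.map φ).rank ≤ (B.map φ).rank := by
  obtain ⟨C, rfl⟩ := exists_mul_eq_of_span_row_le h
  rw [Matrix.map_mul]
  exact rank_mul_le_right _ _

theorem rank_map_eq_of_span_row_eq [Fintype ι] [Fintype κ] [Fintype n]
    {A : Matrix ι n R} {B : Matrix κ n R}
    (h : Submodule.span R (Set.range A.row) = Submodule.span R (Set.range B.row)) :
    (A.map φ).rank = (B.map φ).rank :=
  (rank_map_le_of_span_row_le φ h.le).antisymm (rank_map_le_of_span_row_le φ h.ge)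

theorem rank_map_of_basis [Fintype κ] [Fintype n] [DecidableEq n] (b : Module.Basis n R (n → R))
    {f : κ → n} (hf : Function.Injective f) :
    ((Matrix.of fun j => b (f j)).map φ).rank = Fintype.card κ := by
  have hdet : IsUnit (Matrix.of b).det := by
    have : Matrix.of b = ((Pi.basisFun R n).toMatrix b)ᵀ := by
      ext i j; simp [Module.Basis.toMatrix_apply]
    rw [this, det_transpose]
    let _ := (Pi.basisFun R n).invertibleToMatrix b
    exact isUnit_det_of_invertible _
  have hrows : LinearIndependent K ((Matrix.of b).map φ).row := by
    rw [linearIndependent_rows_iff_isUnit, isUnit_iff_isUnit_det, ← RingHom.mapMatrix_apply,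
      ← RingHom.map_det]
    exact hdet.map φ
  exact (hrows.comp f hf).rank_matrix

end Matrix

namespace Module.Basis.SmithNormalForm

variable {R M ι : Type*} [CommRing R] [AddCommGroup M] [Module R M] {N : Submodule R M} {k : ℕ}
  (snf : Basis.SmithNormalForm N ι k)

theorem a_smul_bM_mem (i : Fin k) : snf.a i • snf.bM (snf.f i) ∈ N :=
  snf.snf i ▸ (snf.bN i).2

theorem a_ne_zero [Nontrivial R] (i : Fin k) : snf.a i ≠ 0 := by
  intro ha
  apply snf.bN.ne_zero i
  ext
  simp [snf.snf, ha]

theorem bM_notMem_of_not_isUnit {i : Fin k} (hi : ¬IsUnit (snf.a i)) :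
    snf.bM (snf.f i) ∉ N := by
  intro h
  have h1 := snf.repr_apply_embedding_eq_repr_smul ⟨snf.bM (snf.f i), h⟩ (i := i)
  simp only [repr_self, Finsupp.single_eq_same, map_smul, Finsupp.smul_apply, smul_eq_mul] at h1
  exact hi (.of_mul_eq_one _ h1.symm)

theorem eq_span_bM_of_isUnit (hu : ∀ i, IsUnit (snf.a i)) :
    N = Submodule.span R (Set.range fun i => snf.bM (snf.f i)) := by
  apply le_antisymm
  · intro x hx
    obtain ⟨c, rfl⟩ := snf.bN.mem_submodule_iff'.mp hx
    refine Submodule.sum_mem _ fun j _ => Submodule.smul_mem _ _ ?_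
    rw [snf.snf]
    exact Submodule.smul_mem _ _ (Submodule.subset_span ⟨j, rfl⟩)
  · rw [Submodule.span_le]
    rintro _ ⟨i, rfl⟩
    exact (N.smul_mem_iff_of_isUnit (hu i)).mp (snf.a_smul_bM_mem i)

end Module.Basis.SmithNormalForm

theorem stmt1 {m n : ℕ} (M : Matrix (Fin m) (Fin n) ℂ[X])
    (hrank : ¬ ∃ r : ℕ, ∀ t : ℂ, (M.map (Polynomial.eval t)).rank = r) :
    ∃ (m₀ : Fin n → ℂ[X]) (p : ℂ[X]),
      m₀ ∉ rowModule M ∧ p ≠ 0 ∧ p • m₀ ∈ rowModule M := by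
  classical
  obtain ⟨k, snf⟩ := (rowModule M).smithNormalForm (Pi.basisFun ℂ[X] (Fin n))
  by_cases hu : ∀ i, IsUnit (snf.a i)
  · refine absurd ⟨k, fun t => ?_⟩ hrank
    have hspan : Submodule.span ℂ[X] (Set.range M.row) =
        Submodule.span ℂ[X] (Set.range (Matrix.of fun j => snf.bM (snf.f j)).row) :=
      snf.eq_span_bM_of_isUnit hu
    rw [← coe_evalRingHom, Matrix.rank_map_eq_of_span_row_eq _ hspan,
      Matrix.rank_map_of_basis _ _ snf.f.injective, Fintype.card_fin]
  · push Not at hu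
    obtain ⟨i, hi⟩ := hu
    exact ⟨_, _, snf.bM_notMem_of_not_isUnit hi, snf.a_ne_zero i, snf.a_smul_bM_mem i⟩
end

section
/- Let p ∈ ℂ[τ] be a nonzero polynomial and u a distribution on ℝ with p(d/dt) u = 0 and u|_{(-∞,0)} = 0. Then u = 0. -/
/-!
For a test function `ψ` put `g k t = (-1)^k u(ψ⁽ᵏ⁾(· - t))`. Translation `t ↦ ψ(· - t)` is
differentiable in the Schwartz topology with derivative `-ψ'(· - t)`, so `g k` has derivative
`g (k + 1)`, and `p(d/dt)u = 0` says `∑ aₖ g k = 0`. Thus `(g 0, …, g (n - 1))` solves a linear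
ODE. If the support of `ψ` is bounded above, all `g k` vanish for very negative `t` because `u`
vanishes on `(-∞, 0)`; by Grönwall they vanish identically, and `u ψ = g 0 0 = 0`. Such `ψ` are
dense: `b(c·) • φ → φ` as `c → 0⁺` for a bump function `b`.
-/

open Polynomial SchwartzMap
open Filter Topology Set
open scoped ContDiff

section Calculus

variable {E : Type*} [NormedAddCommGroup E] [NormedSpace ℝ E]

theorem norm_sub_sub_smul_le_of_hasDerivAt {f f' f'' : ℝ → E}
    (hf : ∀ x, HasDerivAt f (f' x) x) (hf' : ∀ x, HasDerivAt f' (f'' x) x) {a b M : ℝ}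
    (hM : ∀ x ∈ uIcc a b, ‖f'' x‖ ≤ M) :
    ‖f b - f a - (b - a) • f' a‖ ≤ M * (b - a) ^ 2 := by
  have hM0 : 0 ≤ M := (norm_nonneg _).trans (hM a left_mem_uIcc)
  have hf'_sub : ∀ y ∈ uIcc a b, ‖f' y - f' a‖ ≤ M * |b - a| := fun y hy =>
    ((convex_uIcc a b).norm_image_sub_le_of_norm_hasDerivWithin_le
      (fun x _ => (hf' x).hasDerivWithinAt) hM left_mem_uIcc hy).trans
      (mul_le_mul_of_nonneg_left (abs_sub_left_of_mem_uIcc hy) hM0)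
  have := (convex_uIcc a b).norm_image_sub_le_of_norm_hasDerivWithin_le
    (f := fun y => f y - (y - a) • f' a)
    (fun y _ => ((hf y).sub (((hasDerivAt_id y).sub_const a).smul_const (f' a))).hasDerivWithinAt)
    (by simpa using hf'_sub) left_mem_uIcc right_mem_uIcc
  calc ‖f b - f a - (b - a) • f' a‖ = ‖f b - (b - a) • f' a - (f a - (a - a) • f' a)‖ := by
        congr 1; simp only [sub_self, zero_smul, sub_zero]; abel
    _ ≤ M * |b - a| * ‖b - a‖ := this
    _ = M * (b - a) ^ 2 := by rw [Real.norm_eq_abs, mul_assoc, ← sq, sq_abs]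

theorem eq_zero_of_polynomial_sum_eq_zero_of_hasDerivAt {𝕜 : Type*} [NormedField 𝕜]
    [NormedSpace 𝕜 E] {p : 𝕜[X]} (hp : p ≠ 0) {g : ℕ → ℝ → E}
    (hg : ∀ k t, HasDerivAt (g k) (g (k + 1) t) t) (hode : ∀ t, p.sum (fun k a => a • g k t) = 0)
    {t₀ : ℝ} (h₀ : ∀ k, g k t₀ = 0) {t : ℝ} (ht : t₀ ≤ t) : g 0 t = 0 := by
  set n := p.natDegree
  have hlead : ∀ s, g n s = -p.leadingCoeff⁻¹ • ∑ k ∈ Finset.range n, p.coeff k • g k s := by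
    intro s
    have h := hode s
    rw [Polynomial.sum_over_range (f := fun k a => a • g k s) _ (fun _ => zero_smul 𝕜 _),
      Finset.sum_range_succ, add_eq_zero_iff_eq_neg'] at h
    rw [neg_smul, ← smul_neg, ← h]
    exact (inv_smul_smul₀ (leadingCoeff_ne_zero.mpr hp) _).symm
  set F : ℝ → Fin n → E := fun s i => g i s
  set K := max 1 (‖p.leadingCoeff⁻¹‖ * ∑ k ∈ Finset.range n, ‖p.coeff k‖)
  have hbound : ∀ s, ‖(fun i : Fin n => g (i + 1) s)‖ ≤ K * ‖F s‖ := by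
    intro s
    refine (pi_norm_le_iff_of_nonneg (by positivity)).2 fun i => ?_
    by_cases hi : (i : ℕ) + 1 < n
    · exact (norm_le_pi_norm (F s) ⟨i + 1, hi⟩).trans
        (le_mul_of_one_le_left (norm_nonneg _) (le_max_left _ _))
    · rw [show (i : ℕ) + 1 = n by omega, hlead, norm_smul, norm_neg]
      calc ‖p.leadingCoeff⁻¹‖ * ‖∑ k ∈ Finset.range n, p.coeff k • g k s‖
          ≤ ‖p.leadingCoeff⁻¹‖ * ∑ k ∈ Finset.range n, ‖p.coeff k‖ * ‖F s‖ := by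
            gcongr
            refine (norm_sum_le _ _).trans (Finset.sum_le_sum fun k hk => ?_)
            rw [norm_smul]
            exact mul_le_mul_of_nonneg_left
              (norm_le_pi_norm (F s) ⟨k, Finset.mem_range.mp hk⟩) (norm_nonneg _)
        _ ≤ K * ‖F s‖ := by
            rw [← Finset.sum_mul, ← mul_assoc]
            exact mul_le_mul_of_nonneg_right (le_max_right _ _) (norm_nonneg _)
  have hF : ∀ s, HasDerivAt F (fun i : Fin n => g (i + 1) s) s :=
    fun s => hasDerivAt_pi.2 fun i => hg i s
  have hFzero : F t = 0 :=
    eq_zero_of_abs_deriv_le_mul_abs_self_of_eq_zero_right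
      (fun s _ => (hF s).continuousAt.continuousWithinAt)
      (fun s _ => (hF s).hasDerivWithinAt) (funext fun i => h₀ i) (fun s _ => hbound s) t
      ⟨ht, le_rfl⟩
  rcases Nat.eq_zero_or_pos n with hn | hn
  · rw [← hn, hlead, hn, Finset.sum_range_zero, smul_zero]
  · exact congrFun hFzero ⟨0, hn⟩

end Calculus

namespace SchwartzMap

variable {E F : Type*} [NormedAddCommGroup E] [NormedSpace ℝ E] [NormedAddCommGroup F]
  [NormedSpace ℝ F]

theorem tendsto_nhds_of_seminorm_le {α : Type*} {l : Filter α} {f : α → 𝓢(E, F)} {φ : 𝓢(E, F)}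
    {r : α → ℝ} (hr : Tendsto r l (𝓝 0))
    (h : ∀ k m, ∃ C, ∀ᶠ a in l, SchwartzMap.seminorm ℝ k m (f a - φ) ≤ C * r a) :
    Tendsto f l (𝓝 φ) := by
  rw [(schwartz_withSeminorms ℝ E F).tendsto_nhds]
  rintro ⟨k, m⟩ δ hδ
  obtain ⟨C, hC⟩ := h k m
  have hCr : Tendsto (fun a => C * r a) l (𝓝 0) := by simpa using hr.const_mul C
  filter_upwards [hC, hCr.eventually_lt_const hδ] with a h₁ h₂
  exact h₁.trans_lt h₂

theorem iteratedDeriv_eq_derivCLM_pow (k : ℕ) (f : 𝓢(ℝ, F)) :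
    iteratedDeriv k f = (derivCLM ℝ F ^ k) f := by
  induction k generalizing f with
  | zero => rfl
  | succ k ih => rw [iteratedDeriv_succ', pow_succ, mul_apply_eq_comp, ← ih]; rfl

theorem tsupport_derivCLM_pow_subset (k : ℕ) (f : 𝓢(ℝ, F)) :
    tsupport ((derivCLM ℝ F ^ k) f) ⊆ tsupport f := by
  induction k with
  | zero => rfl
  | succ k ih =>
    rw [pow_succ', mul_apply_eq_comp]
    exact (tsupport_deriv_subset (f := (derivCLM ℝ F ^ k) f)).trans ih

theorem derivCLM_compSubConstCLM (a : ℝ) (f : 𝓢(ℝ, F)) :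
    derivCLM ℝ F (compSubConstCLM ℝ a f) = compSubConstCLM ℝ a (derivCLM ℝ F f) := by
  ext x
  exact deriv_comp_sub_const (f := f) a x

theorem commute_derivCLM_compSubConstCLM (a : ℝ) :
    Commute (derivCLM ℝ F) (compSubConstCLM ℝ a) :=
  ContinuousLinearMap.ext (derivCLM_compSubConstCLM a)

theorem tsupport_compSubConstCLM_subset_Iic {f : 𝓢(ℝ, F)} {R : ℝ} (hf : tsupport f ⊆ Iic R)
    (a : ℝ) : tsupport (compSubConstCLM ℝ a f) ⊆ Iic (R + a) := by
  refine closure_minimal (fun x hx => ?_) isClosed_Iic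
  have : x - a ≤ R := hf (subset_tsupport _ hx)
  exact show x ≤ R + a by linarith

theorem derivCLM_pow_compSubConstCLM (k : ℕ) (a : ℝ) (f : 𝓢(ℝ, F)) :
    (derivCLM ℝ F ^ k) (compSubConstCLM ℝ a f) = compSubConstCLM ℝ a ((derivCLM ℝ F ^ k) f) :=
  DFunLike.congr_fun ((commute_derivCLM_compSubConstCLM (F := F) a).pow_left k).eq f

theorem seminorm_compSubConstCLM_sub_add_smul_le (g : 𝓢(ℝ, F)) (k m : ℕ) :
    ∃ C, ∀ ε : ℝ, |ε| ≤ 1 → SchwartzMap.seminorm ℝ k m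
      (compSubConstCLM ℝ ε g - g + ε • derivCLM ℝ F g) ≤ C * ε ^ 2 := by
  set D := derivCLM ℝ F
  set G := (D ^ m) g
  set C := 2 ^ k * (Finset.Iic (k, 0)).sup (fun i => SchwartzMap.seminorm ℝ i.1 i.2)
    ((D ^ (m + 2)) g)
  refine ⟨C, fun ε hε => seminorm_le_bound' ℝ k m _ (by positivity) fun x => ?_⟩
  have hD2G : D (D G) = (D ^ (m + 2)) g := by
    simp only [G, ← mul_apply_eq_comp, ← pow_succ']
  have hiter : iteratedDeriv m (compSubConstCLM ℝ ε g - g + ε • D g) x =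
      G (x - ε) - G x - (x - ε - x) • D G x := by
    have hDG : (D ^ m) (D g) = D G := by
      simp only [G, ← mul_apply_eq_comp, ← pow_succ, ← pow_succ']
    rw [iteratedDeriv_eq_derivCLM_pow, map_add, map_sub, map_smul, derivCLM_pow_compSubConstCLM,
      hDG]
    simp only [add_apply, sub_apply, smul_apply, compSubConstCLM_apply]
    module
  have hbound : ∀ ξ ∈ uIcc x (x - ε), ‖|x| ^ k • D (D G) ξ‖ ≤ C := by
    intro ξ hξ
    have hxξ : |x| ≤ 1 + ‖ξ‖ := by
      have h := abs_sub_left_of_mem_uIcc hξ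
      rw [sub_sub_cancel_left, abs_neg] at h
      rw [Real.norm_eq_abs]
      linarith [abs_sub_abs_le_abs_sub x ξ, abs_sub_comm x ξ]
    have := one_add_le_sup_seminorm_apply (𝕜 := ℝ) (m := (k, 0)) le_rfl le_rfl
      ((D ^ (m + 2)) g) ξ
    rw [norm_iteratedFDeriv_zero] at this
    rw [norm_smul, norm_pow, Real.norm_eq_abs, abs_abs, hD2G]
    exact (mul_le_mul_of_nonneg_right (pow_le_pow_left₀ (abs_nonneg x) hxξ k)
      (norm_nonneg _)).trans this
  -- Taylor's bound for `|x| ^ k • G`, so that the weight sits next to `G''` at the same point.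
  have key := norm_sub_sub_smul_le_of_hasDerivAt (f := fun y => |x| ^ k • G y)
    (fun y => (G.hasDerivAt y).const_smul _) (fun y => ((D G).hasDerivAt y).const_smul _) hbound
  rw [hiter, ← norm_smul_of_nonneg (by positivity)]
  calc ‖|x| ^ k • (G (x - ε) - G x - (x - ε - x) • D G x)‖
      = ‖|x| ^ k • G (x - ε) - |x| ^ k • G x - (x - ε - x) • (|x| ^ k • D G x)‖ := by
        rw [smul_sub, smul_sub, smul_comm]
    _ ≤ C * (x - ε - x) ^ 2 := key
    _ = C * ε ^ 2 := by ring

theorem tendsto_slope_compSubConstCLM (g : 𝓢(ℝ, F)) :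
    Tendsto (fun ε : ℝ => ε⁻¹ • (compSubConstCLM ℝ ε g - g)) (𝓝[≠] 0) (𝓝 (-derivCLM ℝ F g)) := by
  have habs : Tendsto (fun ε : ℝ => |ε|) (𝓝[≠] 0) (𝓝 0) :=
    (continuous_abs.tendsto' 0 0 abs_zero).mono_left nhdsWithin_le_nhds
  refine tendsto_nhds_of_seminorm_le habs fun k m => ?_
  obtain ⟨C, hC⟩ := seminorm_compSubConstCLM_sub_add_smul_le g k m
  refine ⟨C, ?_⟩
  filter_upwards [self_mem_nhdsWithin, nhdsWithin_le_nhds (Metric.closedBall_mem_nhds 0 one_pos)]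
    with ε (hε₀ : ε ≠ 0) hε_ball
  have hε₁ : |ε| ≤ 1 := by simpa using hε_ball
  rw [show ε⁻¹ • (compSubConstCLM ℝ ε g - g) - -derivCLM ℝ F g =
      ε⁻¹ • (compSubConstCLM ℝ ε g - g + ε • derivCLM ℝ F g) by
    rw [smul_add, smul_smul, inv_mul_cancel₀ hε₀, one_smul, sub_neg_eq_add], map_smul_eq_mul,
    norm_inv, Real.norm_eq_abs]
  calc |ε|⁻¹ * SchwartzMap.seminorm ℝ k m (compSubConstCLM ℝ ε g - g + ε • derivCLM ℝ F g)
      ≤ |ε|⁻¹ * (C * ε ^ 2) := by gcongr; exact hC ε hε₁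
    _ = C * |ε| := by rw [← sq_abs]; field_simp

theorem hasDerivAt_apply_compSubConstCLM {G : Type*} [NormedAddCommGroup G] [NormedSpace ℝ G]
    (v : 𝓢(ℝ, F) →L[ℝ] G) (g : 𝓢(ℝ, F)) (t : ℝ) :
    HasDerivAt (fun s => v (compSubConstCLM ℝ s g))
      (-v (compSubConstCLM ℝ t (derivCLM ℝ F g))) t := by
  rw [hasDerivAt_iff_tendsto_slope_zero]
  have h := (v.continuous.tendsto _).comp (tendsto_slope_compSubConstCLM (compSubConstCLM ℝ t g))
  rw [derivCLM_compSubConstCLM, map_neg] at h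
  refine h.congr fun ε => ?_
  simp [compSubConstCLM_comp]

theorem pow_mul_norm_iteratedFDeriv_smul_le {θ : ℝ → ℝ} (hθ : ContDiff ℝ ∞ θ) {M : ℕ → ℝ}
    (hM : ∀ j x, ‖iteratedFDeriv ℝ j θ x‖ ≤ M j) {R : ℝ} (hR : 0 < R)
    (hθ₀ : EqOn θ 0 (Metric.ball 0 R)) (φ : 𝓢(ℝ, F)) (k m : ℕ) (x : ℝ) :
    ‖x‖ ^ k * ‖iteratedFDeriv ℝ m (fun y => θ y • φ y) x‖ ≤
      (∑ j ∈ Finset.range (m + 1),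
        m.choose j * M j * SchwartzMap.seminorm ℝ (k + 1) (m - j) φ) / R := by
  have hM₀ : ∀ j, 0 ≤ M j := fun j => (norm_nonneg _).trans (hM j 0)
  by_cases hx : ‖x‖ < R
  · have hzero : (fun y => θ y • φ y) =ᶠ[𝓝 x] 0 := by
      filter_upwards [Metric.isOpen_ball.mem_nhds (mem_ball_zero_iff.mpr hx)] with y hy
      simp [hθ₀ hy]
    rw [(hzero.iteratedFDeriv ℝ m).eq_of_nhds, iteratedFDeriv_zero, Pi.zero_apply, norm_zero,
      mul_zero]
    exact div_nonneg (Finset.sum_nonneg fun j _ => by have := hM₀ j; positivity) hR.le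
  push Not at hx
  have hweight : ∀ j, R * (‖x‖ ^ k * ‖iteratedFDeriv ℝ (m - j) φ x‖) ≤
      SchwartzMap.seminorm ℝ (k + 1) (m - j) φ := fun j =>
    calc R * (‖x‖ ^ k * ‖iteratedFDeriv ℝ (m - j) φ x‖)
        ≤ ‖x‖ * (‖x‖ ^ k * ‖iteratedFDeriv ℝ (m - j) φ x‖) := by gcongr
      _ = ‖x‖ ^ (k + 1) * ‖iteratedFDeriv ℝ (m - j) φ x‖ := by ring
      _ ≤ _ := le_seminorm ℝ (k + 1) (m - j) φ x
  rw [le_div_iff₀ hR]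
  calc ‖x‖ ^ k * ‖iteratedFDeriv ℝ m (fun y => θ y • φ y) x‖ * R
      ≤ ‖x‖ ^ k * (∑ j ∈ Finset.range (m + 1),
          m.choose j * ‖iteratedFDeriv ℝ j θ x‖ * ‖iteratedFDeriv ℝ (m - j) φ x‖) * R := by
        gcongr
        exact norm_iteratedFDeriv_smul_le hθ (φ.smooth ⊤) x (mod_cast le_top)
    _ = ∑ j ∈ Finset.range (m + 1), m.choose j * ‖iteratedFDeriv ℝ j θ x‖ *
          (R * (‖x‖ ^ k * ‖iteratedFDeriv ℝ (m - j) φ x‖)) := by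
        rw [Finset.mul_sum, Finset.sum_mul]
        exact Finset.sum_congr rfl fun j _ => by ring
    _ ≤ _ := Finset.sum_le_sum fun j _ => mul_le_mul
        (mul_le_mul_of_nonneg_left (hM j x) (by positivity)) (hweight j) (by positivity)
        (by have := hM₀ j; positivity)

theorem _root_.ContDiffBump.exists_norm_iteratedFDeriv_one_sub_comp_mul_le
    (b : ContDiffBump (0 : ℝ)) (j : ℕ) :
    ∃ M, ∀ c ∈ Ioc (0 : ℝ) 1, ∀ x, ‖iteratedFDeriv ℝ j (fun y => 1 - b (c * y)) x‖ ≤ M := by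
  obtain ⟨M, hM⟩ := (b.hasCompactSupport.iteratedFDeriv j).exists_bound_of_continuous
    (b.contDiff.continuous_iteratedFDeriv (by exact_mod_cast le_top))
  have hθ : ∀ y, ‖iteratedDeriv j (fun y => 1 - b y) y‖ ≤ max 1 M := by
    intro y
    rcases Nat.eq_zero_or_pos j with rfl | hj
    · rw [iteratedDeriv_zero, Real.norm_eq_abs, abs_of_nonneg (sub_nonneg.mpr b.le_one)]
      linarith [b.nonneg (x := y), le_max_left 1 M]
    · rw [iteratedDeriv_const_sub hj, iteratedDeriv_neg, norm_neg,
        ← norm_iteratedFDeriv_eq_norm_iteratedDeriv]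
      exact (hM y).trans (le_max_right _ _)
  refine ⟨max 1 M, fun c ⟨hc₀, hc₁⟩ x => ?_⟩
  rw [norm_iteratedFDeriv_eq_norm_iteratedDeriv,
    iteratedDeriv_comp_const_mul (f := fun y => 1 - b y)
      ((contDiff_const.sub b.contDiff).of_le (mod_cast le_top)) c, norm_mul, norm_pow]
  exact (mul_le_of_le_one_left (norm_nonneg _)
    (pow_le_one₀ (norm_nonneg c) (by simpa [abs_of_pos hc₀] using hc₁))).trans (hθ _)

theorem _root_.ContDiffBump.hasTemperateGrowth_comp_mul (b : ContDiffBump (0 : ℝ)) {c : ℝ}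
    (hc : c ≠ 0) : (fun x => b (c * x)).HasTemperateGrowth :=
  (b.hasCompactSupport.comp_smul hc).hasTemperateGrowth
    (b.contDiff.comp (contDiff_const.mul contDiff_id))

theorem tsupport_smulLeftCLM_contDiffBump_comp_mul_subset (b : ContDiffBump (0 : ℝ)) {c : ℝ}
    (hc : 0 < c) (φ : 𝓢(ℝ, F)) :
    tsupport (smulLeftCLM F (fun x => b (c * x)) φ) ⊆ Iic (b.rOut / c) := by
  refine closure_minimal (fun x hx => ?_) isClosed_Iic
  rw [Function.mem_support, smulLeftCLM_apply_apply (b.hasTemperateGrowth_comp_mul hc.ne')] at hx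
  have hcx : c * x ∈ Function.support b := left_ne_zero_of_smul hx
  rw [b.support_eq, mem_ball_zero_iff, Real.norm_eq_abs] at hcx
  rw [mem_Iic, le_div_iff₀ hc, mul_comm]
  exact (le_abs_self _).trans hcx.le

theorem tendsto_smulLeftCLM_contDiffBump_comp_mul (b : ContDiffBump (0 : ℝ)) (φ : 𝓢(ℝ, F)) :
    Tendsto (fun c : ℝ => smulLeftCLM F (fun x => b (c * x)) φ) (𝓝[>] 0) (𝓝 φ) := by
  refine tendsto_nhds_of_seminorm_le (r := fun c => c) (tendsto_id.mono_left nhdsWithin_le_nhds)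
    fun k m => ?_
  choose M hM using b.exists_norm_iteratedFDeriv_one_sub_comp_mul_le
  refine ⟨(∑ j ∈ Finset.range (m + 1),
    m.choose j * M j * SchwartzMap.seminorm ℝ (k + 1) (m - j) φ) / b.rIn, ?_⟩
  filter_upwards [Ioc_mem_nhdsGT one_pos] with c hc
  have hb := b.hasTemperateGrowth_comp_mul hc.1.ne'
  have hdiff : ⇑(smulLeftCLM F (fun x => b (c * x)) φ - φ) = -fun y => (1 - b (c * y)) • φ y := by
    ext y
    simp [hb, sub_smul]
  have hR : 0 < b.rIn / c := div_pos b.rIn_pos hc.1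
  have hM₀ : ∀ j, 0 ≤ M j := fun j => (norm_nonneg _).trans (hM j c hc 0)
  refine seminorm_le_bound ℝ k m _ (mul_nonneg (div_nonneg
    (Finset.sum_nonneg fun j _ => by have := hM₀ j; positivity) b.rIn_pos.le) hc.1.le)
    fun x => ?_
  rw [hdiff, iteratedFDeriv_neg, Pi.neg_apply, norm_neg]
  refine (pow_mul_norm_iteratedFDeriv_smul_le (contDiff_const.sub
    (b.contDiff.comp (contDiff_const.mul contDiff_id))) (fun j => hM j c hc) hR ?_ φ k m x).trans
    (le_of_eq ?_)
  · intro y hy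
    have hcy : c * y ∈ Metric.closedBall 0 b.rIn := by
      rw [mem_closedBall_zero_iff, norm_mul, Real.norm_eq_abs, abs_of_pos hc.1]
      rw [mem_ball_zero_iff, lt_div_iff₀ hc.1] at hy
      linarith
    simp [b.one_of_mem_closedBall hcy]
  · field_simp

end SchwartzMap

theorem apply_eq_zero_of_tsupport_subset_Iic {p : ℂ[X]} (hp : p ≠ 0) {u : 𝓢(ℝ, ℂ) →L[ℝ] ℂ}
    (hode : ∀ φ : 𝓢(ℝ, ℂ),
      (p.sum fun k a => a * (-1 : ℂ) ^ k * u (((SchwartzMap.derivCLM ℝ ℂ) ^ k) φ)) = 0)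
    (hsupp : ∀ φ : 𝓢(ℝ, ℂ), tsupport (φ : ℝ → ℂ) ⊆ Set.Iio 0 → u φ = 0)
    {ψ : 𝓢(ℝ, ℂ)} {R : ℝ} (hψ : tsupport ψ ⊆ Iic R) : u ψ = 0 := by
  set g : ℕ → ℝ → ℂ := fun k t => (-1) ^ k * u (compSubConstCLM ℝ t ((derivCLM ℝ ℂ ^ k) ψ))
  have hg : ∀ k t, HasDerivAt (g k) (g (k + 1) t) t := by
    intro k t
    refine ((hasDerivAt_apply_compSubConstCLM u ((derivCLM ℝ ℂ ^ k) ψ) t).const_mul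
      ((-1 : ℂ) ^ k)).congr_deriv ?_
    change _ = (-1) ^ (k + 1) * u (compSubConstCLM ℝ t ((derivCLM ℝ ℂ ^ (k + 1)) ψ))
    rw [pow_succ' (derivCLM ℝ ℂ), mul_apply_eq_comp]
    ring
  have hrel : ∀ t, p.sum (fun k a => a • g k t) = 0 := by
    intro t
    have h := hode (compSubConstCLM ℝ t ψ)
    simp only [derivCLM_pow_compSubConstCLM] at h
    simpa only [g, smul_eq_mul, mul_assoc] using h
  have h₀ : ∀ k, g k (-|R| - 1) = 0 := by
    intro k
    change (-1) ^ k * u _ = 0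
    rw [hsupp _ ?_, mul_zero]
    refine (tsupport_compSubConstCLM_subset_Iic
      ((tsupport_derivCLM_pow_subset k ψ).trans hψ) _).trans fun x hx => ?_
    exact show x < 0 by linarith [le_abs_self R, show x ≤ R + (-|R| - 1) from hx]
  simpa [g] using eq_zero_of_polynomial_sum_eq_zero_of_hasDerivAt hp hg hrel h₀
    (t := 0) (by linarith [abs_nonneg R])

/-- if `p ∈ ℂ[τ]` is a nonzero polynomial and `u` is a distribution on `ℝ`
with `p(d/dt)u = 0` (in the distributional sense, i.e. tested by duality with the sign
`(-1)^k` for the `k`-th derivative) and `u` vanishes on `(-∞,0)` (i.e. `⟨u,φ⟩ = 0` for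
every test function `φ` with support contained in `(-∞,0)`), then `u = 0`. -/
theorem stmt9 (p : ℂ[X]) (hp : p ≠ 0) (u : 𝓢(ℝ, ℂ) →L[ℝ] ℂ)
    (hode : ∀ φ : 𝓢(ℝ, ℂ),
      (p.sum fun k a => a * (-1 : ℂ) ^ k * u (((SchwartzMap.derivCLM ℝ ℂ) ^ k) φ)) = 0)
    (hsupp : ∀ φ : 𝓢(ℝ, ℂ), tsupport (φ : ℝ → ℂ) ⊆ Set.Iio 0 → u φ = 0) :
    u = 0 := by
  ext φ
  let b : ContDiffBump (0 : ℝ) := default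
  have hlim := (u.continuous.tendsto φ).comp (tendsto_smulLeftCLM_contDiffBump_comp_mul b φ)
  refine tendsto_nhds_unique hlim (tendsto_const_nhds.congr' ?_)
  filter_upwards [self_mem_nhdsWithin] with c (hc : 0 < c)
  exact (apply_eq_zero_of_tsupport_subset_Iic hp hode hsupp
    (tsupport_smulLeftCLM_contDiffBump_comp_mul_subset b hc φ)).symm
end
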